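/- On ℝ⁵ with coordinates (c₁,c₂,c₃,c₄,c₅), set h¹ = (1/4)(h − H) and h² = (√3/12)(h + H). Then the Cartan subalgebra elements act on the short-root vector fields by: [h¹,S¹] = S¹ and [h²,S¹] = 0; [h¹,S²] = −(1/2)S² and [h²,S²] = (√3/2)S²; [h¹,S³] = −(1/2)S³ and [h²,S³] = −(√3/2)S³; [h¹,S⁴] = (1/2)S⁴ and [h²,S⁴] = (√3/2)S⁴, where the Lie bracket of vector fields V, W : ℝ⁵ → ℝ⁵ is [V,W](x) = DW(x)(V(x)) − DV(x)(W(x)). Thus S¹, S², S³, S⁴ are root vectors for the roots (1,0), (−1/2, √3/2), (−1/2, −√3/2), (1/2, √3/2) respectively. -/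

import Mathlib

noncomputable section
set_option maxHeartbeats 1000000

/-- The `i`-th constant coordinate vector field `∂_{cᵢ}` on ℝ⁵. -/
def ee (i : Fin 5) : Fin 5 → ℝ := Pi.single i 1

/-- The Lie bracket of vector fields on ℝ⁵:
`[V,W](x) = DW(x)(V(x)) − DV(x)(W(x))`. -/
def lie (V W : (Fin 5 → ℝ) → (Fin 5 → ℝ)) : (Fin 5 → ℝ) → (Fin 5 → ℝ) :=
  fun x => fderiv ℝ W x (V x) - fderiv ℝ V x (W x)

/-- `Z¹ = ∂_{c₃} + 2c₅∂_{c₂} − 2c₄∂_{c₁}`. -/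
def Z1 (c : Fin 5 → ℝ) : Fin 5 → ℝ := ee 2 + (2 * c 4) • ee 1 - (2 * c 3) • ee 0

/-- `Z² = ∂_{c₄} + 4c₃∂_{c₁} − 2c₅∂_{c₃}`. -/
def Z2 (c : Fin 5 → ℝ) : Fin 5 → ℝ := ee 3 + (4 * c 2) • ee 0 - (2 * c 4) • ee 2

/-- `Z³ = ∂_{c₅} + 2c₄∂_{c₃} − 4c₃∂_{c₂}`. -/
def Z3 (c : Fin 5 → ℝ) : Fin 5 → ℝ := ee 4 + (2 * c 3) • ee 2 - (4 * c 2) • ee 1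

/-- `S¹ = Z² + c₅Z¹`. -/
def S1 (c : Fin 5 → ℝ) : Fin 5 → ℝ := Z2 c + c 4 • Z1 c

/-- `S² = Z³ − c₄Z¹`. -/
def S2 (c : Fin 5 → ℝ) : Fin 5 → ℝ := Z3 c - c 3 • Z1 c

/-- `S³ = −c₁Z² + c₂Z³ − (c₁c₅ + c₂c₄ + c₃²)Z¹`. -/
def S3 (c : Fin 5 → ℝ) : Fin 5 → ℝ :=
  -(c 0) • Z2 c + c 1 • Z3 c - (c 0 * c 4 + c 1 * c 3 + (c 2) ^ 2) • Z1 c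

/-- `S⁴ = 2(∂_{c₃} + c₄∂_{c₁} − c₅∂_{c₂})`. -/
def S4 (c : Fin 5 → ℝ) : Fin 5 → ℝ := (2 : ℝ) • (ee 2 + c 3 • ee 0 - c 4 • ee 1)

/-- The Euler-type field `c₁∂_{c₁} + c₂∂_{c₂} + (1/3)c₃∂_{c₃} − (1/3)c₄∂_{c₄} − (1/3)c₅∂_{c₅}`. -/
def Eul (c : Fin 5 → ℝ) : Fin 5 → ℝ :=
  c 0 • ee 0 + c 1 • ee 1 + ((1 / 3) * c 2) • ee 2 - ((1 / 3) * c 3) • ee 3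
    - ((1 / 3) * c 4) • ee 4

/-- `S⁵ = 2(c₁ + 3c₃c₄)Z¹ − 4c₃Z³ + 6c₄·Eul − 6(c₁c₅ + c₂c₄ + c₃²)∂_{c₂}`. -/
def S5 (c : Fin 5 → ℝ) : Fin 5 → ℝ :=
  (2 * (c 0 + 3 * c 2 * c 3)) • Z1 c - (4 * c 2) • Z3 c + (6 * c 3) • Eul c
    - (6 * (c 0 * c 4 + c 1 * c 3 + (c 2) ^ 2)) • ee 1

/-- `S⁶ = −2(c₂ − 3c₃c₅)Z¹ + 4c₃Z² + 6c₅·Eul − 6(c₁c₅ + c₂c₄ + c₃²)∂_{c₁}`. -/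
def S6 (c : Fin 5 → ℝ) : Fin 5 → ℝ :=
  (-2 * (c 1 - 3 * c 2 * c 4)) • Z1 c + (4 * c 2) • Z2 c + (6 * c 4) • Eul c
    - (6 * (c 0 * c 4 + c 1 * c 3 + (c 2) ^ 2)) • ee 0

/-- `h = −6(c₁∂_{c₁} + c₂∂_{c₂} + (2/3)c₃∂_{c₃} + (1/3)c₄∂_{c₄} + (1/3)c₅∂_{c₅})`. -/
def hvf (c : Fin 5 → ℝ) : Fin 5 → ℝ :=
  (-6 : ℝ) • (c 0 • ee 0 + c 1 • ee 1 + ((2 / 3) * c 2) • ee 2 + ((1 / 3) * c 3) • ee 3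
    + ((1 / 3) * c 4) • ee 4)

/-- `H = −6(c₂∂_{c₂} + (1/3)c₃∂_{c₃} − (1/3)c₄∂_{c₄} + (2/3)c₅∂_{c₅})`. -/
def Hvf (c : Fin 5 → ℝ) : Fin 5 → ℝ :=
  (-6 : ℝ) • (c 1 • ee 1 + ((1 / 3) * c 2) • ee 2 - ((1 / 3) * c 3) • ee 3
    + ((2 / 3) * c 4) • ee 4)

/-- `h¹ = (1/4)(h − H)`. -/
def h1 (c : Fin 5 → ℝ) : Fin 5 → ℝ := (1 / 4 : ℝ) • (hvf c - Hvf c)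

/-- `h² = (√3/12)(h + H)`. -/
def h2 (c : Fin 5 → ℝ) : Fin 5 → ℝ := (Real.sqrt 3 / 12) • (hvf c + Hvf c)


lemma fderiv_coord (i : Fin 5) (x : Fin 5 → ℝ) :
    fderiv ℝ (fun y : Fin 5 → ℝ => y i) x = ContinuousLinearMap.proj i :=
  (ContinuousLinearMap.proj i (R := ℝ) (φ := fun _ : Fin 5 => ℝ)).fderiv

lemma lie_eq' (V W : (Fin 5 → ℝ) → (Fin 5 → ℝ))
    (hV : ∀ x i, DifferentiableAt ℝ (fun y => V y i) x)
    (hW : ∀ x i, DifferentiableAt ℝ (fun y => W y i) x) :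
    lie V W = fun x i =>
      fderiv ℝ (fun y => W y i) x (V x) - fderiv ℝ (fun y => V y i) x (W x) := by
  funext x
  show fderiv ℝ W x (V x) - fderiv ℝ V x (W x) = _
  rw [fderiv_pi (hW x), fderiv_pi (hV x)]
  rfl

lemma S1_eq : S1 = fun c : Fin 5 → ℝ =>
    ![4 * c 2 - 2 * c 3 * c 4, 2 * c 4 * c 4, -c 4, 1, 0] := by
  funext c i
  fin_cases i <;> simp [S1, Z1, Z2, ee, Pi.single_apply] <;> ring

lemma S2_eq : S2 = fun c : Fin 5 → ℝ =>
    ![2 * c 3 * c 3, -(4 * c 2) - 2 * c 3 * c 4, c 3, 0, 1] := by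
  funext c i
  fin_cases i <;> simp [S2, Z1, Z3, ee, Pi.single_apply] <;> ring

lemma S3_eq : S3 = fun c : Fin 5 → ℝ =>
    ![2 * c 0 * c 3 * c 4 + 2 * c 1 * c 3 * c 3 + 2 * c 2 * c 2 * c 3 - 4 * c 0 * c 2,
      -(4 * c 1 * c 2) - 2 * c 0 * c 4 * c 4 - 2 * c 1 * c 3 * c 4 - 2 * c 2 * c 2 * c 4,
      c 0 * c 4 + c 1 * c 3 - c 2 * c 2, -c 0, c 1] := by
  funext c i
  fin_cases i <;> simp [S3, Z1, Z2, Z3, ee, Pi.single_apply] <;> ring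

lemma S4_eq : S4 = fun c : Fin 5 → ℝ =>
    ![2 * c 3, -(2 * c 4), 2, 0, 0] := by
  funext c i
  fin_cases i <;> simp [S4, ee, Pi.single_apply] <;> ring

lemma h1_eq : h1 = fun c : Fin 5 → ℝ =>
    ![-(3 / 2 * c 0), 0, -(1 / 2 * c 2), -c 3, 1 / 2 * c 4] := by
  funext c i
  fin_cases i <;> simp [h1, hvf, Hvf, ee, Pi.single_apply] <;> ring

lemma h2_eq : h2 = fun c : Fin 5 → ℝ =>
    ![-(Real.sqrt 3 / 2 * c 0), -(Real.sqrt 3 * c 1), -(Real.sqrt 3 / 2 * c 2), 0,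
      -(Real.sqrt 3 / 2 * c 4)] := by
  funext c i
  fin_cases i <;> simp [h2, hvf, Hvf, ee, Pi.single_apply] <;> ring

lemma diff_S1 : ∀ (x : Fin 5 → ℝ) (i : Fin 5), DifferentiableAt ℝ (fun y => S1 y i) x := by
  intro x i; rw [S1_eq]; fin_cases i <;> simp <;> fun_prop

lemma diff_S2 : ∀ (x : Fin 5 → ℝ) (i : Fin 5), DifferentiableAt ℝ (fun y => S2 y i) x := by
  intro x i; rw [S2_eq]; fin_cases i <;> simp <;> fun_prop

lemma diff_S3 : ∀ (x : Fin 5 → ℝ) (i : Fin 5), DifferentiableAt ℝ (fun y => S3 y i) x := by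
  intro x i; rw [S3_eq]; fin_cases i <;> simp <;> fun_prop

lemma diff_S4 : ∀ (x : Fin 5 → ℝ) (i : Fin 5), DifferentiableAt ℝ (fun y => S4 y i) x := by
  intro x i; rw [S4_eq]; fin_cases i <;> simp <;> fun_prop

lemma diff_h1 : ∀ (x : Fin 5 → ℝ) (i : Fin 5), DifferentiableAt ℝ (fun y => h1 y i) x := by
  intro x i; rw [h1_eq]; fin_cases i <;> simp <;> fun_prop

lemma diff_h2 : ∀ (x : Fin 5 → ℝ) (i : Fin 5), DifferentiableAt ℝ (fun y => h2 y i) x := by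
  intro x i; rw [h2_eq]; fin_cases i <;> simp <;> fun_prop

/-- The Cartan subalgebra elements `h¹ = (1/4)(h−H)`, `h² = (√3/12)(h+H)`
act on the short-root fields by `[h¹,S¹] = S¹`, `[h²,S¹] = 0`, `[h¹,S²] = −(1/2)S²`,
`[h²,S²] = (√3/2)S²`, `[h¹,S³] = −(1/2)S³`, `[h²,S³] = −(√3/2)S³`, `[h¹,S⁴] = (1/2)S⁴`,
`[h²,S⁴] = (√3/2)S⁴`; i.e. `S¹, S², S³, S⁴` are root vectors for the roots `(1,0)`,
`(−1/2,√3/2)`, `(−1/2,−√3/2)`, `(1/2,√3/2)`. -/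
theorem cartan_action_on_short_roots :
    lie h1 S1 = S1 ∧
    (lie h2 S1 = fun _ => (0 : Fin 5 → ℝ)) ∧
    (lie h1 S2 = fun c => (-(1 / 2) : ℝ) • S2 c) ∧
    (lie h2 S2 = fun c => (Real.sqrt 3 / 2) • S2 c) ∧
    (lie h1 S3 = fun c => (-(1 / 2) : ℝ) • S3 c) ∧
    (lie h2 S3 = fun c => (-(Real.sqrt 3 / 2)) • S3 c) ∧
    (lie h1 S4 = fun c => ((1 / 2) : ℝ) • S4 c) ∧
    (lie h2 S4 = fun c => (Real.sqrt 3 / 2) • S4 c) := by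
  refine ⟨?_, ?_, ?_, ?_, ?_, ?_, ?_, ?_⟩
  ·
    rw [lie_eq' _ _ diff_h1 diff_S1]
    simp only [h1_eq, S1_eq]
    funext x i
    fin_cases i <;>
      simp (disch := fun_prop) [fderiv_fun_sub, fderiv_fun_add, fderiv_fun_mul, fderiv_const_mul,
        fderiv_coord, fderiv_fun_const] <;> ring
  ·
    rw [lie_eq' _ _ diff_h2 diff_S1]
    simp only [h2_eq, S1_eq]
    funext x i
    fin_cases i <;>
      simp (disch := fun_prop) [fderiv_fun_sub, fderiv_fun_add, fderiv_fun_mul, fderiv_const_mul,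
        fderiv_coord, fderiv_fun_const] <;> ring
  ·
    rw [lie_eq' _ _ diff_h1 diff_S2]
    simp only [h1_eq, S2_eq]
    funext x i
    fin_cases i <;>
      simp (disch := fun_prop) [fderiv_fun_sub, fderiv_fun_add, fderiv_fun_mul, fderiv_const_mul,
        fderiv_coord, fderiv_fun_const] <;> ring
  ·
    rw [lie_eq' _ _ diff_h2 diff_S2]
    simp only [h2_eq, S2_eq]
    funext x i
    fin_cases i <;>
      simp (disch := fun_prop) [fderiv_fun_sub, fderiv_fun_add, fderiv_fun_mul, fderiv_const_mul,
        fderiv_coord, fderiv_fun_const] <;> ring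
  ·
    rw [lie_eq' _ _ diff_h1 diff_S3]
    simp only [h1_eq, S3_eq]
    funext x i
    fin_cases i <;>
      simp (disch := fun_prop) [fderiv_fun_sub, fderiv_fun_add, fderiv_fun_mul, fderiv_const_mul,
        fderiv_coord, fderiv_fun_const] <;> ring
  ·
    rw [lie_eq' _ _ diff_h2 diff_S3]
    simp only [h2_eq, S3_eq]
    funext x i
    fin_cases i <;>
      simp (disch := fun_prop) [fderiv_fun_sub, fderiv_fun_add, fderiv_fun_mul, fderiv_const_mul,
        fderiv_coord, fderiv_fun_const] <;> ring
  ·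
    rw [lie_eq' _ _ diff_h1 diff_S4]
    simp only [h1_eq, S4_eq]
    funext x i
    fin_cases i <;>
      simp (disch := fun_prop) [fderiv_sub, fderiv_add, fderiv_mul, fderiv_const_mul,
        fderiv_coord, fderiv_const] <;> ring
  ·
    rw [lie_eq' _ _ diff_h2 diff_S4]
    simp only [h2_eq, S4_eq]
    funext x i
    fin_cases i <;>
      simp (disch := fun_prop) [fderiv_sub, fderiv_add, fderiv_mul, fderiv_const_mul,
        fderiv_coord, fderiv_const] <;> ring

end
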